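/- arXiv:2310.18955 — 9 statements merged into one kernel-verified Lean document; each statement's English description precedes it below -/
import Mathlib

section
/- Let Q : ℕ → ℝ be a nonnegative sequence with Q(1) > 0, and suppose for all t ≥ 1 it holds that Q(t)² ≤ ∑_{τ=1}^{t} Q(τ)² / (∑_{s=1}^{τ} Q(s)). Then Q(t) ≤ √t for all t ≥ 1. -/
open Finset

theorem stmt_0 (Q : ℕ → ℝ)
    (hpos : ∀ t, 0 ≤ Q t) (h1 : 0 < Q 1)
    (hrec : ∀ t, 1 ≤ t →
      (Q t) ^ 2 ≤ ∑ τ ∈ Finset.Icc 1 t, (Q τ) ^ 2 / (∑ s ∈ Finset.Icc 1 τ, Q s)) :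
    ∀ t, 1 ≤ t → Q t ≤ Real.sqrt t := by
  set S : ℕ → ℝ := fun t => ∑ s ∈ Finset.Icc 1 t, Q s with hS
  set D : ℕ → ℝ := fun t => ∑ τ ∈ Finset.Icc 1 t, (Q τ) ^ 2 / S τ with hD
  have hSpos : ∀ t, 1 ≤ t → 0 < S t := by
    intro t ht
    have h1mem : 1 ∈ Finset.Icc 1 t := by simp [ht]
    have := Finset.single_le_sum (f := Q) (fun i _ => hpos i) h1mem
    exact lt_of_lt_of_le h1 this
  have hQS : ∀ τ, 1 ≤ τ → Q τ ≤ S τ := by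
    intro τ hτ
    exact Finset.single_le_sum (f := Q) (fun i _ => hpos i) (by simp [hτ])
  have hterm : ∀ τ, 1 ≤ τ → (Q τ) ^ 2 / S τ ≤ Q τ := by
    intro τ hτ
    rw [div_le_iff₀ (hSpos τ hτ)]
    calc (Q τ) ^ 2 = Q τ * Q τ := sq (Q τ)
      _ ≤ Q τ * S τ := mul_le_mul_of_nonneg_left (hQS τ hτ) (hpos τ)
  have hDS : ∀ t, D t ≤ S t := by
    intro t
    apply Finset.sum_le_sum
    intro i hi
    exact hterm i (Finset.mem_Icc.mp hi).1
  have hQ2S : ∀ t, 1 ≤ t → (Q t) ^ 2 ≤ S t := fun t ht =>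
    le_trans (hrec t ht) (hDS t)
  have hstep : ∀ t, 1 ≤ t → (Q t) ^ 2 / S t ≤ 1 := by
    intro t ht
    rw [div_le_one (hSpos t ht)]
    exact hQ2S t ht
  have hDt : ∀ t, 1 ≤ t → D t ≤ t := by
    intro t ht
    induction t with
    | zero => omega
    | succ n ih =>
      rcases Nat.eq_or_lt_of_le ht with h | h
      · have hn0 : n = 0 := by omega
        subst hn0
        have hD1 : D 1 = (Q 1) ^ 2 / S 1 := by simp [hD]
        rw [hD1]
        simpa using hstep 1 le_rfl
      · have hn : 1 ≤ n := by omega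
        have hsplit : D (n + 1) = D n + (Q (n+1)) ^ 2 / S (n+1) := by
          simp only [hD]
          rw [← Finset.sum_Icc_succ_top (by omega : 1 ≤ n + 1)]
        rw [hsplit]
        push_cast
        have := hstep (n+1) (by omega)
        linarith [ih hn]
  intro t ht
  have h2 : (Q t) ^ 2 ≤ (t : ℝ) := le_trans (hrec t ht) (hDt t ht)
  rw [show ((t : ℕ) : ℝ) = ((t : ℝ)) from rfl] at h2
  exact (Real.le_sqrt (hpos t) (by positivity)).mpr h2
end

section
/- Let Q : ℕ → ℝ be a nonnegative sequence with Q(1) > 0, and suppose for all t ≥ 1 it holds that Q(t)² ≤ ∑_{τ=1}^{t} Q(τ)² / (∑_{s=1}^{τ} Q(s)). Then for all t ≥ 1, Q(t) ≤ 1 - ln(Q(1)) + (3/2)·ln t. -/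
open Finset

theorem stmt_1 (Q : ℕ → ℝ)
    (hpos : ∀ t, 0 ≤ Q t) (h1 : 0 < Q 1)
    (hrec : ∀ t, 1 ≤ t →
      (Q t) ^ 2 ≤ ∑ τ ∈ Finset.Icc 1 t, (Q τ) ^ 2 / (∑ s ∈ Finset.Icc 1 τ, Q s)) :
    ∀ t, 1 ≤ t → Q t ≤ 1 - Real.log (Q 1) + (3 / 2) * Real.log t := by
  set S : ℕ → ℝ := fun τ => ∑ s ∈ Finset.Icc 1 τ, Q s with hSdef
  have hmem1 : ∀ τ : ℕ, 1 ≤ τ → τ ∈ Finset.Icc 1 τ := by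
    intro τ hτ; exact Finset.mem_Icc.mpr ⟨hτ, le_rfl⟩
  have hQleS : ∀ τ, 1 ≤ τ → Q τ ≤ S τ := by
    intro τ hτ
    exact Finset.single_le_sum (fun i _ => hpos i) (hmem1 τ hτ)
  have hQ1leS : ∀ τ, 1 ≤ τ → Q 1 ≤ S τ := by
    intro τ hτ
    exact Finset.single_le_sum (fun i _ => hpos i) (by simp [Finset.mem_Icc, hτ])
  have hSpos : ∀ τ, 1 ≤ τ → 0 < S τ := fun τ hτ => lt_of_lt_of_le h1 (hQ1leS τ hτ)
  have hSmono : ∀ a b : ℕ, a ≤ b → S a ≤ S b := by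
    intro a b hab
    apply Finset.sum_le_sum_of_subset_of_nonneg (Finset.Icc_subset_Icc_right hab)
    intro i _ _; exact hpos i
  -- Q τ ^ 2 ≤ S τ
  have hQ2S : ∀ τ, 1 ≤ τ → Q τ ^ 2 ≤ S τ := by
    intro τ hτ
    calc Q τ ^ 2 ≤ ∑ σ ∈ Finset.Icc 1 τ, Q σ ^ 2 / S σ := hrec τ hτ
      _ ≤ ∑ σ ∈ Finset.Icc 1 τ, Q σ := by
          apply Finset.sum_le_sum
          intro σ hσ
          have h1σ : 1 ≤ σ := (Finset.mem_Icc.mp hσ).1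
          rw [div_le_iff₀ (hSpos σ h1σ)]
          have := hQleS σ h1σ
          nlinarith [hpos σ]
      _ = S τ := rfl
  -- Q τ ^ 2 ≤ τ
  have hQ2t : ∀ τ : ℕ, 1 ≤ τ → Q τ ^ 2 ≤ (τ : ℝ) := by
    intro τ hτ
    calc Q τ ^ 2 ≤ ∑ σ ∈ Finset.Icc 1 τ, Q σ ^ 2 / S σ := hrec τ hτ
      _ ≤ ∑ σ ∈ Finset.Icc 1 τ, (1 : ℝ) := by
          apply Finset.sum_le_sum
          intro σ hσ
          have h1σ : 1 ≤ σ := (Finset.mem_Icc.mp hσ).1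
          rw [div_le_one (hSpos σ h1σ)]
          exact hQ2S σ h1σ
      _ = (τ : ℝ) := by simp
  have hQsqrt : ∀ τ : ℕ, 1 ≤ τ → Q τ ≤ Real.sqrt τ := by
    intro τ hτ
    exact (Real.le_sqrt (hpos τ) (by positivity)).mpr (hQ2t τ hτ)
  -- log-sum lemma
  have hlogsum : ∀ τ : ℕ, 1 ≤ τ →
      (∑ σ ∈ Finset.Icc 1 τ, Q σ / S σ) ≤ 1 + Real.log (S τ) - Real.log (Q 1) := by
    intro τ hτ
    induction τ, hτ using Nat.le_induction with
    | base =>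
        have hS1 : S 1 = Q 1 := by simp [hSdef]
        simp [hS1, div_self (ne_of_gt h1)]
    | succ n hn ih =>
        rw [Finset.sum_Icc_succ_top (by omega)]
        have hSsucc : S (n + 1) = S n + Q (n + 1) := by
          simp only [hSdef]
          rw [Finset.sum_Icc_succ_top (by omega)]
        have hSn : 0 < S n := hSpos n hn
        have hSn1 : 0 < S (n + 1) := hSpos (n + 1) (by omega)
        have hlog : Real.log (S n / S (n + 1)) ≤ S n / S (n + 1) - 1 :=
          Real.log_le_sub_one_of_pos (by positivity)
        rw [Real.log_div (ne_of_gt hSn) (ne_of_gt hSn1)] at hlog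
        have hkey : Q (n + 1) / S (n + 1) ≤ Real.log (S (n + 1)) - Real.log (S n) := by
          have h2 : Q (n + 1) / S (n + 1) = 1 - S n / S (n + 1) := by
            field_simp
            linarith [hSsucc]
          rw [h2]; linarith
        linarith
  -- max argument
  intro t ht
  have hne : (Finset.Icc 1 t).Nonempty := ⟨1, by simp [Finset.mem_Icc, ht]⟩
  obtain ⟨ts, hts, hMeq⟩ := Finset.exists_mem_eq_sup' hne Q
  set M : ℝ := (Finset.Icc 1 t).sup' hne Q with hMdef
  have hMle : ∀ τ ∈ Finset.Icc 1 t, Q τ ≤ M := fun τ hτ => Finset.le_sup' Q hτ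
  have hts1 : 1 ≤ ts := (Finset.mem_Icc.mp hts).1
  have htst : ts ≤ t := (Finset.mem_Icc.mp hts).2
  have hMpos : 0 < M := lt_of_lt_of_le h1 (hMle 1 (by simp [Finset.mem_Icc, ht]))
  have hM2 : M ^ 2 ≤ M * (1 + Real.log (S ts) - Real.log (Q 1)) := by
    calc M ^ 2 = Q ts ^ 2 := by rw [hMeq]
      _ ≤ ∑ σ ∈ Finset.Icc 1 ts, Q σ ^ 2 / S σ := hrec ts hts1
      _ ≤ ∑ σ ∈ Finset.Icc 1 ts, M * (Q σ / S σ) := by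
          apply Finset.sum_le_sum
          intro σ hσ
          have h1σ : 1 ≤ σ := (Finset.mem_Icc.mp hσ).1
          have hσt : σ ∈ Finset.Icc 1 t := by
            simp only [Finset.mem_Icc] at hσ ⊢; omega
          have hQM : Q σ ≤ M := hMle σ hσt
          have hSσ : 0 < S σ := hSpos σ h1σ
          have hq : 0 ≤ Q σ / S σ := div_nonneg (hpos σ) hSσ.le
          calc Q σ ^ 2 / S σ = Q σ * (Q σ / S σ) := by field_simp
            _ ≤ M * (Q σ / S σ) := mul_le_mul_of_nonneg_right hQM hq
      _ = M * ∑ σ ∈ Finset.Icc 1 ts, Q σ / S σ := by rw [Finset.mul_sum]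
      _ ≤ M * (1 + Real.log (S ts) - Real.log (Q 1)) := by
          apply mul_le_mul_of_nonneg_left (hlogsum ts hts1) (le_of_lt hMpos)
  have hMbound : M ≤ 1 + Real.log (S ts) - Real.log (Q 1) := by nlinarith
  -- bound log (S t)
  have h1t : (1 : ℝ) ≤ (t : ℝ) := by exact_mod_cast ht
  have hSt : S t ≤ (t : ℝ) * Real.sqrt t := by
    calc S t = ∑ σ ∈ Finset.Icc 1 t, Q σ := rfl
      _ ≤ ∑ σ ∈ Finset.Icc 1 t, Real.sqrt t := by
          apply Finset.sum_le_sum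
          intro σ hσ
          have h1σ : 1 ≤ σ := (Finset.mem_Icc.mp hσ).1
          have hσt : σ ≤ t := (Finset.mem_Icc.mp hσ).2
          exact (hQsqrt σ h1σ).trans (Real.sqrt_le_sqrt (by exact_mod_cast hσt))
      _ = (t : ℝ) * Real.sqrt t := by
          rw [Finset.sum_const, Nat.card_Icc]; simp [nsmul_eq_mul]
  have hlogSt : Real.log (S t) ≤ (3 / 2) * Real.log t := by
    calc Real.log (S t) ≤ Real.log ((t : ℝ) * Real.sqrt t) :=
          Real.log_le_log (hSpos t ht) hSt
      _ = Real.log t + Real.log t / 2 := by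
          rw [Real.log_mul (by linarith) (by positivity), Real.log_sqrt (by linarith)]
      _ = (3 / 2) * Real.log t := by ring
  have hlogts : Real.log (S ts) ≤ Real.log (S t) :=
    Real.log_le_log (hSpos ts hts1) (hSmono ts t htst)
  have : Q t ≤ M := hMle t (by simp [Finset.mem_Icc, ht])
  linarith
end

section
/- Let c > 0 and let Q : ℕ → ℝ be a nonnegative sequence with Q(1) > 0 satisfying Q(t)² ≤ c·∑_{τ=1}^{t} Q(τ)² / (∑_{s=1}^{τ} Q(s)) for all t ≥ 1. Then Q(t) = O(ln t); more precisely there exists a constant C (depending on c and Q(1)) such that Q(t) ≤ c·ln t + C·ln(ln t + 2) for all t ≥ 1. -/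
open Finset

set_option maxHeartbeats 1000000 in
theorem stmt_2 (c : ℝ) (hc : 0 < c) (Q : ℕ → ℝ)
    (hpos : ∀ t, 0 ≤ Q t) (h1 : 0 < Q 1)
    (hrec : ∀ t, 1 ≤ t →
      (Q t) ^ 2 ≤ c * ∑ τ ∈ Finset.Icc 1 t, (Q τ) ^ 2 / (∑ s ∈ Finset.Icc 1 τ, Q s)) :
    ∃ C : ℝ, ∀ t, 1 ≤ t →
      Q t ≤ c * Real.log t + C * Real.log (Real.log t + 2) := by
  set S : ℕ → ℝ := fun t => ∑ s ∈ Finset.Icc 1 t, Q s with hSdef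
  have hSpos : ∀ t, 1 ≤ t → 0 < S t := by
    intro t ht
    have h2 : Q 1 ≤ S t :=
      Finset.single_le_sum (f := Q) (fun i _ => hpos i) (by simp [Finset.mem_Icc, ht])
    linarith
  have hSsucc : ∀ t : ℕ, S (t + 1) = S t + Q (t + 1) := by
    intro t
    simpa using Finset.sum_Icc_succ_top (Nat.le_add_left 1 t) Q
  have hS1 : S 1 = Q 1 := by simp [hSdef]
  -- telescoping log bound
  have hA : ∀ t, 1 ≤ t →
      ∑ τ ∈ Finset.Icc 1 t, Q τ / S τ ≤ 1 + Real.log (S t) - Real.log (Q 1) := by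
    intro t ht
    induction t, ht using Nat.le_induction with
    | base => simp [hS1, div_self (ne_of_gt h1)]
    | succ n hn ih =>
      have hSn := hSpos n hn
      have hSn1 := hSpos (n + 1) (by omega)
      have hstep : Q (n + 1) / S (n + 1) ≤ Real.log (S (n + 1)) - Real.log (S n) := by
        have hl : Real.log (S n / S (n + 1)) ≤ S n / S (n + 1) - 1 :=
          Real.log_le_sub_one_of_pos (by positivity)
        rw [Real.log_div (ne_of_gt hSn) (ne_of_gt hSn1)] at hl
        have hq : Q (n + 1) / S (n + 1) = 1 - S n / S (n + 1) := by
          field_simp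
          linarith [hSsucc n]
        rw [hq]; linarith
      have hsum : ∑ τ ∈ Finset.Icc 1 (n + 1), Q τ / S τ
          = (∑ τ ∈ Finset.Icc 1 n, Q τ / S τ) + Q (n + 1) / S (n + 1) :=
        Finset.sum_Icc_succ_top (Nat.le_add_left 1 n) _
      rw [hsum]; linarith
  -- running max
  set M : ℕ → ℝ := fun t => (insert 1 (Finset.Icc 1 t)).sup' (Finset.insert_nonempty 1 _) Q
    with hMdef
  have hMQ : ∀ τ t, τ ∈ Finset.Icc 1 t → Q τ ≤ M t := by
    intro τ t hτ
    exact Finset.le_sup' Q (Finset.mem_insert_of_mem hτ)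
  have hM1 : ∀ t, Q 1 ≤ M t := fun t => Finset.le_sup' Q (Finset.mem_insert_self 1 _)
  have hMpos : ∀ t, 0 < M t := fun t => lt_of_lt_of_le h1 (hM1 t)
  have hMmono : ∀ t t' : ℕ, t ≤ t' → M t ≤ M t' := by
    intro t t' htt
    apply Finset.sup'_le
    intro b hb
    rcases Finset.mem_insert.mp hb with hb | hb
    · subst hb; exact hM1 t'
    · exact hMQ b t' (Finset.mem_Icc.mpr ⟨(Finset.mem_Icc.mp hb).1, le_trans (Finset.mem_Icc.mp hb).2 htt⟩)
  have hMattain : ∀ t, 1 ≤ t → ∃ τ ∈ Finset.Icc 1 t, M t = Q τ := by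
    intro t ht
    obtain ⟨b, hb, hbe⟩ := Finset.exists_mem_eq_sup' (Finset.insert_nonempty 1 (Finset.Icc 1 t)) Q
    rcases Finset.mem_insert.mp hb with hb | hb
    · exact ⟨1, Finset.mem_Icc.mpr ⟨le_refl 1, ht⟩, by rw [hb] at hbe; exact hbe⟩
    · exact ⟨b, hb, hbe⟩
  set K : ℝ := 1 - Real.log (Q 1) with hKdef
  -- key pointwise inequality
  have hkey : ∀ t, 1 ≤ t →
      Q t ^ 2 ≤ c * M t * (K + Real.log t + Real.log (M t)) := by
    intro t ht
    have hAle : ∑ τ ∈ Finset.Icc 1 t, Q τ ^ 2 / S τ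
        ≤ M t * (1 + Real.log (S t) - Real.log (Q 1)) := by
      calc ∑ τ ∈ Finset.Icc 1 t, Q τ ^ 2 / S τ
          ≤ ∑ τ ∈ Finset.Icc 1 t, M t * (Q τ / S τ) := by
            apply Finset.sum_le_sum
            intro τ hτ
            have hτ1 : 1 ≤ τ := (Finset.mem_Icc.mp hτ).1
            have hSτ := hSpos τ hτ1
            have : Q τ ^ 2 / S τ = Q τ * (Q τ / S τ) := by ring
            rw [this]
            exact mul_le_mul_of_nonneg_right (hMQ τ t hτ)
              (div_nonneg (hpos τ) hSτ.le)
        _ = M t * ∑ τ ∈ Finset.Icc 1 t, Q τ / S τ := by rw [Finset.mul_sum]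
        _ ≤ M t * (1 + Real.log (S t) - Real.log (Q 1)) :=
            mul_le_mul_of_nonneg_left (hA t ht) (le_of_lt (hMpos t))
    have hStle : S t ≤ (t : ℝ) * M t := by
      calc S t ≤ ∑ _τ ∈ Finset.Icc 1 t, M t :=
            Finset.sum_le_sum (fun τ hτ => hMQ τ t hτ)
        _ = (t : ℝ) * M t := by
            rw [Finset.sum_const, Nat.card_Icc]; simp [nsmul_eq_mul]
    have hlogS : Real.log (S t) ≤ Real.log t + Real.log (M t) := by
      have ht0 : (0 : ℝ) < (t : ℝ) := by exact_mod_cast ht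
      calc Real.log (S t) ≤ Real.log ((t : ℝ) * M t) :=
            Real.log_le_log (hSpos t ht) hStle
        _ = Real.log t + Real.log (M t) :=
            Real.log_mul (ne_of_gt ht0) (ne_of_gt (hMpos t))
    have := hrec t ht
    calc Q t ^ 2 ≤ c * ∑ τ ∈ Finset.Icc 1 t, Q τ ^ 2 / S τ := this
      _ ≤ c * (M t * (1 + Real.log (S t) - Real.log (Q 1))) :=
          mul_le_mul_of_nonneg_left hAle (le_of_lt hc)
      _ = c * M t * (1 + Real.log (S t) - Real.log (Q 1)) := by ring
      _ ≤ c * M t * (K + Real.log t + Real.log (M t)) := by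
          have hMt := hMpos t
          apply mul_le_mul_of_nonneg_left _ (mul_nonneg hc.le hMt.le)
          rw [hKdef]; linarith [hlogS]
  -- self-bounding inequality for M
  have hMle : ∀ t, 1 ≤ t → M t ≤ c * (K + Real.log t + Real.log (M t)) := by
    intro t ht
    obtain ⟨τ, hτmem, hτeq⟩ := hMattain t ht
    obtain ⟨hτ1, hτt⟩ := Finset.mem_Icc.mp hτmem
    have hk := hkey τ hτ1
    set X : ℝ := K + Real.log τ + Real.log (M τ) with hXdef
    set Y : ℝ := K + Real.log t + Real.log (M t) with hYdef
    have hXY : X ≤ Y := by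
      have hlogτ : Real.log (τ : ℝ) ≤ Real.log (t : ℝ) := by
        apply Real.log_le_log (by exact_mod_cast hτ1)
        exact_mod_cast hτt
      have hlogM : Real.log (M τ) ≤ Real.log (M t) :=
        Real.log_le_log (hMpos τ) (hMmono τ t hτt)
      rw [hXdef, hYdef]; linarith
    have hX0 : 0 ≤ X := by
      by_contra hx
      push_neg at hx
      have : c * M τ * X < 0 := mul_neg_of_pos_of_neg (mul_pos hc (hMpos τ)) hx
      nlinarith [sq_nonneg (Q τ)]
    have hMτt := hMmono τ t hτt
    have hMt := hMpos t
    have hMτ := hMpos τ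
    have h2 : M t ^ 2 ≤ c * M t * Y := by
      calc M t ^ 2 = Q τ ^ 2 := by rw [hτeq]
        _ ≤ c * M τ * X := hk
        _ ≤ c * M t * X :=
            mul_le_mul_of_nonneg_right (mul_le_mul_of_nonneg_left hMτt hc.le) hX0
        _ ≤ c * M t * Y :=
            mul_le_mul_of_nonneg_left hXY (mul_nonneg hc.le hMt.le)
    nlinarith [h2, hMt]
  -- crude bound : M t ≤ 2 c log t + c₀
  set c₀ : ℝ := 2 * c * (K + Real.log (2 * c) - 1) with hc0def
  have hMbound : ∀ t, 1 ≤ t → M t ≤ 2 * c * Real.log t + c₀ := by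
    intro t ht
    have hMt := hMpos t
    have h2c : (0 : ℝ) < 2 * c := by linarith
    have hl : Real.log (M t / (2 * c)) ≤ M t / (2 * c) - 1 :=
      Real.log_le_sub_one_of_pos (by positivity)
    rw [Real.log_div (ne_of_gt hMt) (ne_of_gt h2c)] at hl
    have hml := hMle t ht
    have hid : c * (M t / (2 * c)) = M t / 2 := by field_simp
    nlinarith [hml, hl]
  set D : ℝ := 2 * c + max c₀ 0 with hDdef
  have hD : 0 < D := by
    have := le_max_right c₀ (0:ℝ); rw [hDdef]; linarith
  have hMD : ∀ t, 1 ≤ t → M t ≤ D * (Real.log t + 2) := by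
    intro t ht
    have hlt : 0 ≤ Real.log (t : ℝ) := Real.log_natCast_nonneg t
    have h1' := le_max_left c₀ (0:ℝ)
    have h2' := le_max_right c₀ (0:ℝ)
    have := hMbound t ht
    rw [hDdef]; nlinarith
  -- final constant
  set C : ℝ := c + max (c * K + c * Real.log D) 0 / Real.log 2 with hCdef
  refine ⟨C, fun t ht => ?_⟩
  have hlt : 0 ≤ Real.log (t : ℝ) := Real.log_natCast_nonneg t
  have hlogM : Real.log (M t) ≤ Real.log D + Real.log (Real.log t + 2) := by
    calc Real.log (M t) ≤ Real.log (D * (Real.log t + 2)) :=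
          Real.log_le_log (hMpos t) (hMD t ht)
      _ = Real.log D + Real.log (Real.log t + 2) :=
          Real.log_mul (ne_of_gt hD) (by linarith)
  -- Q t ≤ c * (K + log t + log M t)
  have hQle : Q t ≤ c * (K + Real.log t + Real.log (M t)) := by
    have hk := hkey t ht
    have hml := hMle t ht
    have hMt := hMpos t
    have hQt := hpos t
    set Y := K + Real.log (t : ℝ) + Real.log (M t) with hYd
    have hcY : 0 < c * Y := lt_of_lt_of_le hMt hml
    have hY0 : 0 < Y := by
      by_contra hy
      push_neg at hy
      have : c * Y ≤ 0 := mul_nonpos_of_nonneg_of_nonpos hc.le hy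
      linarith
    by_contra hcon
    push_neg at hcon
    have h3 : (c * Y) * (c * Y) < Q t * Q t := mul_self_lt_mul_self hcY.le hcon
    nlinarith [hk, h3, mul_le_mul_of_nonneg_left hml hcY.le]
  have hL : Real.log 2 ≤ Real.log (Real.log t + 2) :=
    Real.log_le_log (by norm_num) (by linarith)
  have hl2 : (0 : ℝ) < Real.log 2 := Real.log_pos (by norm_num)
  have hmax1 := le_max_left (c * K + c * Real.log D) (0:ℝ)
  have hmax2 := le_max_right (c * K + c * Real.log D) (0:ℝ)
  have hfrac : c * K + c * Real.log D ≤
      max (c * K + c * Real.log D) 0 / Real.log 2 * Real.log (Real.log t + 2) := by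
    calc c * K + c * Real.log D ≤ max (c * K + c * Real.log D) 0 := hmax1
      _ = max (c * K + c * Real.log D) 0 / Real.log 2 * Real.log 2 := by
          rw [div_mul_cancel₀ _ (ne_of_gt hl2)]
      _ ≤ max (c * K + c * Real.log D) 0 / Real.log 2 * Real.log (Real.log t + 2) := by
          apply mul_le_mul_of_nonneg_left hL
          positivity
  calc Q t ≤ c * (K + Real.log t + Real.log (M t)) := hQle
    _ ≤ c * K + c * Real.log t + c * (Real.log D + Real.log (Real.log t + 2)) := by
        nlinarith [hlogM]
    _ ≤ c * Real.log t + C * Real.log (Real.log t + 2) := by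
        rw [hCdef]; nlinarith [hfrac, hL, hl2]
end

section
/- Let c > 0 and let Q : {1,…,T} → ℝ be a nonnegative sequence satisfying Q(t)² ≤ c·√(∑_{τ=1}^{t} Q(τ)²) for all 1 ≤ t ≤ T. Then √(∑_{τ=1}^{T} Q(τ)²) ≤ c·T, and consequently Q(t) ≤ c·√T for every 1 ≤ t ≤ T. -/
open Finset

theorem stmt_3 (T : ℕ) (hT : 1 ≤ T) (c : ℝ) (hc : 0 < c) (Q : ℕ → ℝ)
    (hpos : ∀ t ∈ Finset.Icc 1 T, 0 ≤ Q t)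
    (hrec : ∀ t ∈ Finset.Icc 1 T,
      (Q t) ^ 2 ≤ c * Real.sqrt (∑ τ ∈ Finset.Icc 1 t, (Q τ) ^ 2)) :
    Real.sqrt (∑ τ ∈ Finset.Icc 1 T, (Q τ) ^ 2) ≤ c * T ∧
      ∀ t ∈ Finset.Icc 1 T, Q t ≤ c * Real.sqrt T := by
  set S : ℕ → ℝ := fun t => ∑ τ ∈ Finset.Icc 1 t, (Q τ) ^ 2 with hS
  have hSnonneg : ∀ t, 0 ≤ S t := fun t =>
    Finset.sum_nonneg (fun i _ => sq_nonneg _)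
  have hSmono : ∀ t ∈ Finset.Icc 1 T, S t ≤ S T := by
    intro t ht
    simp only [Finset.mem_Icc] at ht
    exact Finset.sum_le_sum_of_subset_of_nonneg
      (Finset.Icc_subset_Icc_right ht.2) (fun i _ _ => sq_nonneg _)
  have hsqmono : ∀ t ∈ Finset.Icc 1 T, Real.sqrt (S t) ≤ Real.sqrt (S T) :=
    fun t ht => Real.sqrt_le_sqrt (hSmono t ht)
  -- S T ≤ T * (c * sqrt (S T))
  have key : S T ≤ T * (c * Real.sqrt (S T)) := by
    calc S T = ∑ τ ∈ Finset.Icc 1 T, (Q τ) ^ 2 := rfl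
    _ ≤ ∑ τ ∈ Finset.Icc 1 T, c * Real.sqrt (S T) := by
        apply Finset.sum_le_sum
        intro i hi
        exact (hrec i hi).trans (by
          have := hsqmono i hi
          nlinarith)
    _ = T * (c * Real.sqrt (S T)) := by
        rw [Finset.sum_const, Nat.card_Icc]
        simp
  have h1 : Real.sqrt (S T) ≤ c * T := by
    rcases eq_or_lt_of_le (Real.sqrt_nonneg (S T)) with h0 | h0
    · rw [← h0]
      positivity
    · have hsq : Real.sqrt (S T) * Real.sqrt (S T) = S T :=
        Real.mul_self_sqrt (hSnonneg T)
      nlinarith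
  refine ⟨h1, fun t ht => ?_⟩
  have h2 : (Q t) ^ 2 ≤ c ^ 2 * T := by
    have := (hrec t ht).trans (mul_le_mul_of_nonneg_left
      ((hsqmono t ht).trans h1) hc.le)
    nlinarith
  have := Real.sqrt_le_sqrt h2
  rw [Real.sqrt_sq (hpos t ht)] at this
  calc Q t ≤ Real.sqrt (c ^ 2 * T) := this
  _ = c * Real.sqrt T := by
      rw [Real.sqrt_mul (sq_nonneg c), Real.sqrt_sq hc.le]
end

section
/- Let Q₁,…,Q_k : ℕ → ℝ satisfy Q_i(t) = max(0, Q_i(t-1) + g_i(t, x_t)) with Q_i(0)=0, where each g_i(t, ·) : Ω → ℝ is convex and there exists x* ∈ Ω with g_i(t, x*) ≤ 0 for all i, t. Define the surrogate costs f̂_t(x) = 2∑_{i=1}^k Q_i(t)·g_i(t, x). Then for all t ≥ 1: ∑_{i=1}^k Q_i(t)² ≤ ∑_{τ=1}^{t} (f̂_τ(x_τ) − f̂_τ(x*)). -/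
open Finset

theorem stmt_8 (d k : ℕ) (Ω : Set (Fin d → ℝ)) (hΩ : Convex ℝ Ω)
    (g : Fin k → ℕ → (Fin d → ℝ) → ℝ)
    (hcvx : ∀ i t, ConvexOn ℝ Ω (g i t))
    (x : ℕ → (Fin d → ℝ)) (hx : ∀ t, x t ∈ Ω)
    (xstar : Fin d → ℝ) (hxstar : xstar ∈ Ω)
    (hfeas : ∀ i t, g i t xstar ≤ 0)
    (Q : Fin k → ℕ → ℝ) (hQ0 : ∀ i, Q i 0 = 0)
    (hQrec : ∀ i t, Q i (t + 1) = max 0 (Q i t + g i (t + 1) (x (t + 1)))) :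
    ∀ t, 1 ≤ t →
      ∑ i, (Q i t) ^ 2 ≤
        ∑ τ ∈ Finset.Icc 1 t,
          ((2 * ∑ i, Q i τ * g i τ (x τ)) - (2 * ∑ i, Q i τ * g i τ xstar)) := by
  have hQnn : ∀ i t, 0 ≤ Q i t := by
    intro i t
    cases t with
    | zero => rw [hQ0]
    | succ n => rw [hQrec]; exact le_max_left _ _
  have hstep : ∀ i t, (Q i (t+1))^2 - (Q i t)^2
      ≤ 2 * (Q i (t+1) * g i (t+1) (x (t+1))) - 2 * (Q i (t+1) * g i (t+1) xstar) := by
    intro i t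
    have hq := hQnn i t
    have hq1 := hQnn i (t+1)
    have hfs := hfeas i (t+1)
    rcases le_or_gt 0 (Q i t + g i (t+1) (x (t+1))) with h | h
    · have heq : Q i (t+1) = Q i t + g i (t+1) (x (t+1)) := by
        rw [hQrec]; exact max_eq_right h
      nlinarith [sq_nonneg (g i (t+1) (x (t+1)))]
    · have heq : Q i (t+1) = 0 := by
        rw [hQrec]; exact max_eq_left h.le
      nlinarith
  have hstepsum : ∀ t, ∑ i, (Q i (t+1))^2 - ∑ i, (Q i t)^2
      ≤ (2 * ∑ i, Q i (t+1) * g i (t+1) (x (t+1))) - (2 * ∑ i, Q i (t+1) * g i (t+1) xstar) := by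
    intro t
    rw [← Finset.sum_sub_distrib, Finset.mul_sum, Finset.mul_sum, ← Finset.sum_sub_distrib]
    exact Finset.sum_le_sum fun i _ => hstep i t
  intro t ht
  induction t with
  | zero => omega
  | succ n ih =>
    rcases Nat.lt_or_ge n 1 with hn | hn
    · interval_cases n
      rw [show Finset.Icc 1 1 = {1} from rfl, Finset.sum_singleton]
      have := hstepsum 0
      have h0 : ∑ i, (Q i 0)^2 = 0 := by
        apply Finset.sum_eq_zero; intro i _; rw [hQ0]; ring
      linarith
    · have := ih hn
      rw [Finset.sum_Icc_succ_top (by omega : 1 ≤ n+1)]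
      have := hstepsum n
      linarith
end

section
/- Let Q(t) = max(0, Q(t-1) + g(t, x_t)), Q(0) = 0, where g(t,·) is convex and g(t, x*) ≤ 0 for a fixed x* ∈ Ω. Let f(t,·) : Ω → ℝ be convex, V > 0, and define f̂_t(x) = V·f(t,x) + 2Q(t)·g(t,x). Then for any 0 ≤ t₁ ≤ t₂: Q(t₂)² − Q(t₁)² + V·∑_{τ=t₁+1}^{t₂}(f(τ,x_τ) − f(τ,x*)) ≤ ∑_{τ=t₁+1}^{t₂}(f̂_τ(x_τ) − f̂_τ(x*)). -/
open Finset

theorem stmt_9 (d : ℕ) (Ω : Set (Fin d → ℝ)) (hΩ : Convex ℝ Ω)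
    (f g : ℕ → (Fin d → ℝ) → ℝ)
    (hf : ∀ t, ConvexOn ℝ Ω (f t)) (hg : ∀ t, ConvexOn ℝ Ω (g t))
    (x : ℕ → (Fin d → ℝ)) (hx : ∀ t, x t ∈ Ω)
    (xstar : Fin d → ℝ) (hxstar : xstar ∈ Ω)
    (hfeas : ∀ t, g t xstar ≤ 0)
    (V : ℝ) (hV : 0 < V)
    (Q : ℕ → ℝ) (hQ0 : Q 0 = 0)
    (hQrec : ∀ t, Q (t + 1) = max 0 (Q t + g (t + 1) (x (t + 1)))) :
    ∀ t₁ t₂ : ℕ, t₁ ≤ t₂ →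
      (Q t₂) ^ 2 - (Q t₁) ^ 2 +
          V * ∑ τ ∈ Finset.Icc (t₁ + 1) t₂, (f τ (x τ) - f τ xstar) ≤
        ∑ τ ∈ Finset.Icc (t₁ + 1) t₂,
          ((V * f τ (x τ) + 2 * Q τ * g τ (x τ)) -
            (V * f τ xstar + 2 * Q τ * g τ xstar)) := by
  intro t₁ t₂ h
  induction t₂, h using Nat.le_induction with
  | base => simp
  | succ n hn ih =>
    rw [Finset.sum_Icc_succ_top (by omega), Finset.sum_Icc_succ_top (by omega),
      mul_add, mul_sub]
    have hQnn : 0 ≤ Q (n+1) := by rw [hQrec]; exact le_max_left _ _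
    have h1 : Q (n+1) ^ 2 - Q n ^ 2 ≤ 2 * Q (n+1) * g (n+1) (x (n+1)) := by
      rcases le_or_gt (Q n + g (n+1) (x (n+1))) 0 with hc | hc
      · have he : Q (n+1) = 0 := by rw [hQrec]; exact max_eq_left hc
        rw [he]; nlinarith [sq_nonneg (Q n)]
      · have he : Q (n+1) = Q n + g (n+1) (x (n+1)) := by
          rw [hQrec]; exact max_eq_right hc.le
        rw [he]; nlinarith [sq_nonneg (g (n+1) (x (n+1)))]
    have h2 : 0 ≤ 2 * Q (n+1) * (-(g (n+1) xstar)) := by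
      have hgs := hfeas (n+1); nlinarith
    nlinarith [ih]
end

section
/- Let Q : {1,…,T} → ℝ be nonnegative and satisfy Q(t)² ≤ a·V·t + b·√(∑_{τ=1}^{t} Q(τ)²) for all 1 ≤ t ≤ T, where a, b, V > 0. Then √(∑_{τ=1}^{t} Q(τ)²) ≤ t·(b + √(a·V)) for all t, and consequently Q(t)² ≤ a·V·t + b·t·(b + √(aV)), so Q(t) = O(√(V·t)). -/
open Finset

theorem stmt_11 (T : ℕ) (hT : 1 ≤ T) (a b V : ℝ)
    (ha : 0 < a) (hb : 0 < b) (hV : 0 < V) (Q : ℕ → ℝ)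
    (hpos : ∀ t ∈ Finset.Icc 1 T, 0 ≤ Q t)
    (hrec : ∀ t ∈ Finset.Icc 1 T,
      (Q t) ^ 2 ≤ a * V * t + b * Real.sqrt (∑ τ ∈ Finset.Icc 1 t, (Q τ) ^ 2)) :
    ∀ t ∈ Finset.Icc 1 T,
      Real.sqrt (∑ τ ∈ Finset.Icc 1 t, (Q τ) ^ 2) ≤ t * (b + Real.sqrt (a * V)) ∧
      (Q t) ^ 2 ≤ a * V * t + b * t * (b + Real.sqrt (a * V)) := by
  intro t ht
  simp only [Finset.mem_Icc] at ht
  obtain ⟨ht1, htT⟩ := ht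
  set s : ℕ → ℝ := fun u => ∑ τ ∈ Finset.Icc 1 u, (Q τ) ^ 2 with hs
  have hsnonneg : ∀ u, 0 ≤ s u := fun u =>
    Finset.sum_nonneg fun i _ => sq_nonneg _
  set x : ℝ := Real.sqrt (s t) with hx
  have hxnn : 0 ≤ x := Real.sqrt_nonneg _
  have hx2 : x ^ 2 = s t := Real.sq_sqrt (hsnonneg t)
  -- monotonicity of s
  have hmono : ∀ τ ∈ Finset.Icc 1 t, s τ ≤ s t := by
    intro τ hτ
    simp only [Finset.mem_Icc] at hτ
    exact Finset.sum_le_sum_of_subset_of_nonneg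
      (Finset.Icc_subset_Icc le_rfl hτ.2) (fun i _ _ => sq_nonneg _)
  -- each term bound
  have hterm : ∀ τ ∈ Finset.Icc 1 t, (Q τ) ^ 2 ≤ a * V * t + b * x := by
    intro τ hτ
    simp only [Finset.mem_Icc] at hτ
    have hτT : τ ∈ Finset.Icc 1 T := Finset.mem_Icc.mpr ⟨hτ.1, hτ.2.trans htT⟩
    have h1 := hrec τ hτT
    have h2 : Real.sqrt (s τ) ≤ x :=
      Real.sqrt_le_sqrt (hmono τ (Finset.mem_Icc.mpr hτ))
    have h3 : a * V * (τ : ℝ) ≤ a * V * (t : ℝ) := by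
      have h4 : (τ : ℝ) ≤ (t : ℝ) := Nat.cast_le.mpr hτ.2
      have : 0 ≤ a * V := by positivity
      exact mul_le_mul_of_nonneg_left h4 this
    calc (Q τ) ^ 2 ≤ a * V * τ + b * Real.sqrt (s τ) := h1
      _ ≤ a * V * t + b * x := by nlinarith
  have hsum : s t ≤ (t : ℝ) * (a * V * t + b * x) := by
    calc s t ≤ ∑ τ ∈ Finset.Icc 1 t, (a * V * t + b * x) :=
          Finset.sum_le_sum hterm
      _ = (t : ℝ) * (a * V * t + b * x) := by
          rw [Finset.sum_const, Nat.card_Icc]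
          simp only [Nat.add_sub_cancel, nsmul_eq_mul]
  have hquad : x ^ 2 ≤ a * V * t ^ 2 + b * t * x := by
    rw [hx2]; nlinarith
  have hsq : Real.sqrt (a * V) ^ 2 = a * V :=
    Real.sq_sqrt (by positivity)
  have hsqnn : 0 ≤ Real.sqrt (a * V) := Real.sqrt_nonneg _
  have htpos : (1 : ℝ) ≤ (t : ℝ) := by exact_mod_cast ht1
  have hxle : x ≤ (t : ℝ) * (b + Real.sqrt (a * V)) := by
    by_contra h
    push_neg at h
    have htb : 0 < (t : ℝ) * (b + Real.sqrt (a * V)) := by positivity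
    have hxpos : 0 < x := htb.trans h
    have hgt : (t : ℝ) * Real.sqrt (a * V) ≤ x := by nlinarith
    have hkey := mul_lt_mul_of_pos_right h hxpos
    have hkey2 := mul_le_mul_of_nonneg_left hgt
      (mul_nonneg (Nat.cast_nonneg t) hsqnn)
    nlinarith
  refine ⟨hxle, ?_⟩
  have h1 := hrec t (Finset.mem_Icc.mpr ⟨ht1, htT⟩)
  calc (Q t) ^ 2 ≤ a * V * t + b * x := h1
    _ ≤ a * V * t + b * t * (b + Real.sqrt (a * V)) := by nlinarith
end

section
/- Let Q : {1,…,T} → ℝ be a nondecreasing nonnegative sequence and R : {1,…,T} → ℝ, and suppose for all t: Q(t)² + V·R(t) ≤ 2GD·Q(t)·√t + 2GD·V·√t, with G, D, V > 0. Then for all t: V·R(t) ≤ 2GD·V·√t + G²D²·t, i.e., R(t) ≤ 2GD√t + G²D²t/V. Moreover, if R(t) ≥ 0 at some round t, then Q(t) ≤ 2GD√t + √(2GD·V·√t). -/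
open Finset

theorem stmt_12 (T : ℕ) (G D V : ℝ) (hG : 0 < G) (hD : 0 < D) (hV : 0 < V)
    (Q R : ℕ → ℝ)
    (hpos : ∀ t ∈ Finset.Icc 1 T, 0 ≤ Q t)
    (hmono : ∀ s ∈ Finset.Icc 1 T, ∀ t ∈ Finset.Icc 1 T, s ≤ t → Q s ≤ Q t)
    (hrec : ∀ t ∈ Finset.Icc 1 T,
      (Q t) ^ 2 + V * R t ≤
        2 * G * D * Q t * Real.sqrt t + 2 * G * D * V * Real.sqrt t) :
    (∀ t ∈ Finset.Icc 1 T,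
        V * R t ≤ 2 * G * D * V * Real.sqrt t + G ^ 2 * D ^ 2 * t) ∧
    (∀ t ∈ Finset.Icc 1 T, 0 ≤ R t →
        Q t ≤ 2 * G * D * Real.sqrt t + Real.sqrt (2 * G * D * V * Real.sqrt t)) := by
  constructor
  · intro t ht
    have h := hrec t ht
    have hst : Real.sqrt t * Real.sqrt t = t := Real.mul_self_sqrt (Nat.cast_nonneg t)
    have h2 : 0 ≤ Q t ^ 2 - 2 * G * D * Q t * Real.sqrt t + G ^ 2 * D ^ 2 * (t : ℝ) := by
      have e : (Q t - G * D * Real.sqrt t) ^ 2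
          = Q t ^ 2 - 2 * G * D * Q t * Real.sqrt t
            + G ^ 2 * D ^ 2 * (Real.sqrt t * Real.sqrt t) := by ring
      rw [hst] at e
      rw [← e]; exact sq_nonneg _
    linarith
  · intro t ht hR
    have h := hrec t ht
    have hQ := hpos t ht
    have hst : Real.sqrt (t : ℕ) * Real.sqrt (t : ℕ) = (t : ℝ) :=
      Real.mul_self_sqrt (Nat.cast_nonneg t)
    have hstn : 0 ≤ Real.sqrt (t : ℕ) := Real.sqrt_nonneg _
    have hb : 0 ≤ 2 * G * D * V * Real.sqrt t := by positivity
    have hs : Real.sqrt (2 * G * D * V * Real.sqrt t) * Real.sqrt (2 * G * D * V * Real.sqrt t)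
        = 2 * G * D * V * Real.sqrt t := Real.mul_self_sqrt hb
    have hsn : 0 ≤ Real.sqrt (2 * G * D * V * Real.sqrt t) := Real.sqrt_nonneg _
    have hVR : 0 ≤ V * R t := mul_nonneg hV.le hR
    nlinarith [sq_nonneg (Q t - 2 * G * D * Real.sqrt t - Real.sqrt (2 * G * D * V * Real.sqrt t)),
      mul_nonneg hstn (mul_pos hG hD).le, mul_nonneg hsn hQ]
end

section
/- Suppose Q : {1,…,T} → ℝ is nondecreasing and nonnegative, R : {1,…,T} → ℝ, and for all t ≤ T: Q(t)² + V·R(t) ≤ (V·G²/α)·ln t + (G²/(αV))·Q(t)²·ln T, where G, α > 0 and V = 2G²·ln T/α with ln T ≥ 1. Then for all t: Q(t)² + 2V·R(t) ≤ (2VG²/α)·ln t. In particular, R(t) ≥ 0 implies Q(t) ≤ (2G²/α)·√(ln T · ln t) ≤ (2G²/α)·ln T, and Q(t)² ≥ 0 implies R(t) ≤ (G²/α)·ln t. -/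
open Finset

theorem stmt_13 (T : ℕ) (G α V : ℝ) (hG : 0 < G) (hα : 0 < α)
    (hV : V = 2 * G ^ 2 * Real.log T / α) (hlog : 1 ≤ Real.log T)
    (Q R : ℕ → ℝ)
    (hpos : ∀ t ∈ Finset.Icc 1 T, 0 ≤ Q t)
    (hmono : ∀ s ∈ Finset.Icc 1 T, ∀ t ∈ Finset.Icc 1 T, s ≤ t → Q s ≤ Q t)
    (hrec : ∀ t ∈ Finset.Icc 1 T,
      (Q t) ^ 2 + V * R t ≤
        (V * G ^ 2 / α) * Real.log t + (G ^ 2 / (α * V)) * (Q t) ^ 2 * Real.log T) :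
    (∀ t ∈ Finset.Icc 1 T,
        (Q t) ^ 2 + 2 * V * R t ≤ (2 * V * G ^ 2 / α) * Real.log t) ∧
    (∀ t ∈ Finset.Icc 1 T, 0 ≤ R t →
        Q t ≤ (2 * G ^ 2 / α) * Real.sqrt (Real.log T * Real.log t) ∧
        Q t ≤ (2 * G ^ 2 / α) * Real.log T) ∧
    (∀ t ∈ Finset.Icc 1 T, R t ≤ (G ^ 2 / α) * Real.log t) := by
  have hG2 : (0:ℝ) < G ^ 2 := by positivity
  have hVpos : 0 < V := by
    rw [hV]; positivity
  have hkey : G ^ 2 / (α * V) * Real.log T = 1 / 2 := by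
    rw [hV]
    field_simp
  -- main inequality
  have hmain : ∀ t ∈ Finset.Icc 1 T,
      (Q t) ^ 2 + 2 * V * R t ≤ (2 * V * G ^ 2 / α) * Real.log t := by
    intro t ht
    have h := hrec t ht
    rw [show (G ^ 2 / (α * V)) * (Q t) ^ 2 * Real.log T
        = (G ^ 2 / (α * V) * Real.log T) * (Q t) ^ 2 by ring, hkey] at h
    linarith [h, show 2*V*R t = 2*(V*R t) from by ring,
      show 2*V*G^2/α*Real.log (t:ℕ) = 2*(V*G^2/α*Real.log (t:ℕ)) from by ring]
  refine ⟨hmain, ?_, ?_⟩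
  · intro t ht hR
    have ht1 : 1 ≤ t := (Finset.mem_Icc.mp ht).1
    have htT : t ≤ T := (Finset.mem_Icc.mp ht).2
    have hlt : 0 ≤ Real.log t := Real.log_natCast_nonneg t
    have hltT : Real.log t ≤ Real.log T := by
      apply Real.log_le_log (by exact_mod_cast ht1)
      exact_mod_cast htT
    have hQ : 0 ≤ Q t := hpos t ht
    have hQ2 : (Q t) ^ 2 ≤ (2 * V * G ^ 2 / α) * Real.log t := by
      have := hmain t ht
      nlinarith
    have hsq : (Q t) ^ 2 ≤ ((2 * G ^ 2 / α) * Real.sqrt (Real.log T * Real.log t)) ^ 2 := by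
      have hs : (Real.sqrt (Real.log T * Real.log t)) ^ 2 = Real.log T * Real.log t :=
        Real.sq_sqrt (by positivity)
      calc (Q t) ^ 2 ≤ (2 * V * G ^ 2 / α) * Real.log t := hQ2
        _ = ((2 * G ^ 2 / α) * Real.sqrt (Real.log T * Real.log t)) ^ 2 := by
            rw [mul_pow, hs, hV]; field_simp
    have h1 : Q t ≤ (2 * G ^ 2 / α) * Real.sqrt (Real.log T * Real.log t) := by
      have hnn : 0 ≤ (2 * G ^ 2 / α) * Real.sqrt (Real.log T * Real.log t) := by positivity
      nlinarith
    refine ⟨h1, h1.trans ?_⟩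
    have h2 : Real.sqrt (Real.log T * Real.log t) ≤ Real.sqrt (Real.log T * Real.log T) :=
      Real.sqrt_le_sqrt (by nlinarith)
    rw [Real.sqrt_mul_self (by linarith)] at h2
    have hfac : (0:ℝ) ≤ 2 * G ^ 2 / α := by positivity
    exact mul_le_mul_of_nonneg_left h2 hfac
  · intro t ht
    have h := hmain t ht
    have hQ : 0 ≤ (Q t) ^ 2 := sq_nonneg _
    have : 2 * V * R t ≤ 2 * V * ((G ^ 2 / α) * Real.log t) := by
      calc 2 * V * R t ≤ (2 * V * G ^ 2 / α) * Real.log t := by linarith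
        _ = 2 * V * ((G ^ 2 / α) * Real.log t) := by ring
    exact le_of_mul_le_mul_left this (by linarith)
end
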